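/- arXiv:1311.4822 — 2 statements merged into one kernel-verified Lean document; each statement's English description precedes it below -/
import Mathlib

section
/- The newborn submatrix of the next-generation matrix factors as the product of the newborn submatrices of the dispersion matrix and the partial next-generation matrix: N̄ = D̄ · W̄. -/
open Matrix BigOperators

/-- Spectral radius of a real square matrix: the maximum modulus of its complex
eigenvalues (elements of the spectrum of the matrix viewed over `ℂ`). -/
noncomputable def specRad {ι : Type*} [Fintype ι] [DecidableEq ι]
    (M : Matrix ι ι ℝ) : ℝ :=
  sSup {r : ℝ | ∃ μ : ℂ, μ ∈ spectrum ℂ (M.map Complex.ofReal) ∧ r = ‖μ‖}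

/-- The induced `L¹` operator norm of a real matrix: the maximum absolute column sum. -/
noncomputable def colNorm {ι : Type*} [Fintype ι] (M : Matrix ι ι ℝ) : ℝ :=
  ⨆ q, ∑ p, |M p q|

/-- Local fecundity matrix: first row `(f 0, …, f (m-1))`, other rows zero. -/
def localF (m : ℕ) (f : Fin m → ℝ) : Matrix (Fin m) (Fin m) ℝ :=
  Matrix.of fun k' k => if (k' : ℕ) = 0 then f k else 0

/-- Local survival matrix: diagonal entries `sd k`, subdiagonal entries `ss k`,
all other entries zero. -/
def localS (m : ℕ) (sd ss : Fin m → ℝ) : Matrix (Fin m) (Fin m) ℝ :=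
  Matrix.of fun k' k =>
    if k' = k then sd k else if (k' : ℕ) = (k : ℕ) + 1 then ss k else 0

/-- Global (block-diagonal) fecundity matrix `F = ⊕ᵢ Fⁱ`, indexed by
(stage, patch) pairs. -/
def fecMat (m n : ℕ) (f : Fin m → Fin n → ℝ) :
    Matrix (Fin m × Fin n) (Fin m × Fin n) ℝ :=
  Matrix.of fun p q =>
    if p.2 = q.2 then localF m (fun k => f k q.2) p.1 q.1 else 0

/-- Global (block-diagonal) survival matrix `S = ⊕ᵢ Sⁱ`. -/
def survMat (m n : ℕ) (sd ss : Fin m → Fin n → ℝ) :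
    Matrix (Fin m × Fin n) (Fin m × Fin n) ℝ :=
  Matrix.of fun p q =>
    if p.2 = q.2 then localS m (fun k => sd k q.2) (fun k => ss k q.2) p.1 q.1 else 0

/-- Global dispersion matrix: the `(i,j)` patch block is `diag (d 0 i j, …, d (m-1) i j)`. -/
def dispMat (m n : ℕ) (d : Fin m → Fin n → Fin n → ℝ) :
    Matrix (Fin m × Fin n) (Fin m × Fin n) ℝ :=
  Matrix.of fun p q => if p.1 = q.1 then d q.1 p.2 q.2 else 0

/-- Next-generation matrix `N = D F (I - D S)⁻¹`. -/
noncomputable def nextGen (m n : ℕ) (f : Fin m → Fin n → ℝ)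
    (sd ss : Fin m → Fin n → ℝ) (d : Fin m → Fin n → Fin n → ℝ) :
    Matrix (Fin m × Fin n) (Fin m × Fin n) ℝ :=
  dispMat m n d * fecMat m n f * (1 - dispMat m n d * survMat m n sd ss)⁻¹

/-- Partial next-generation matrix `W = F (I - D S)⁻¹`. -/
noncomputable def partGen (m n : ℕ) (f : Fin m → Fin n → ℝ)
    (sd ss : Fin m → Fin n → ℝ) (d : Fin m → Fin n → Fin n → ℝ) :
    Matrix (Fin m × Fin n) (Fin m × Fin n) ℝ :=
  fecMat m n f * (1 - dispMat m n d * survMat m n sd ss)⁻¹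

/-- Newborn submatrix: keep only the rows and columns with stage index `0`
(the newborn indices). -/
def newbornSub {m n : ℕ} (hm : 0 < m)
    (B : Matrix (Fin m × Fin n) (Fin m × Fin n) ℝ) : Matrix (Fin n) (Fin n) ℝ :=
  Matrix.of fun i j => B (⟨0, hm⟩, i) (⟨0, hm⟩, j)

/-- The alternative net reproductive number `R̂₀ = max_{x ∈ 𝒳} ‖N x‖`, where `𝒳`
is the set of nonnegative `L¹`-unit vectors supported on the newborn indices. -/
noncomputable def altR0 (m n : ℕ)
    (N : Matrix (Fin m × Fin n) (Fin m × Fin n) ℝ) : ℝ :=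
  sSup {r : ℝ | ∃ x : Fin m × Fin n → ℝ, (∀ p, 0 ≤ x p) ∧ (∑ p, |x p|) = 1 ∧
    (∀ p : Fin m × Fin n, (p.1 : ℕ) ≠ 0 → x p = 0) ∧ r = ∑ p, |N.mulVec x p|}

theorem nextGen_eq_dispMat_mul_partGen (m n : ℕ) (f : Fin m → Fin n → ℝ)
    (sd ss : Fin m → Fin n → ℝ) (d : Fin m → Fin n → Fin n → ℝ) :
    nextGen m n f sd ss d = dispMat m n d * partGen m n f sd ss d := by
  rw [nextGen, partGen, Matrix.mul_assoc]

theorem dispMat_apply_of_ne {m n : ℕ} (d : Fin m → Fin n → Fin n → ℝ)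
    {p q : Fin m × Fin n} (h : p.1 ≠ q.1) : dispMat m n d p q = 0 := by
  simp [dispMat, h]

theorem newbornSub_mul_of_newborn_row_eq_zero {m n : ℕ} (hm : 0 < m)
    (B C : Matrix (Fin m × Fin n) (Fin m × Fin n) ℝ)
    (hB : ∀ i q, q.1 ≠ ⟨0, hm⟩ → B (⟨0, hm⟩, i) q = 0) :
    newbornSub hm (B * C) = newbornSub hm B * newbornSub hm C := by
  ext i j
  simp only [newbornSub, Matrix.mul_apply, Matrix.of_apply, Fintype.sum_prod_type]
  rw [Finset.sum_eq_single ⟨0, hm⟩]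
  · intro k _ hk
    exact Finset.sum_eq_zero fun l _ => by rw [hB i (k, l) hk, zero_mul]
  · simp

theorem stmt2
    (m n : ℕ) (hm : 2 ≤ m)
    (f : Fin m → Fin n → ℝ)
    (sd ss : Fin m → Fin n → ℝ)
    (d : Fin m → Fin n → Fin n → ℝ) :
    newbornSub (show 0 < m by omega) (nextGen m n f sd ss d) =
      newbornSub (show 0 < m by omega) (dispMat m n d) *
        newbornSub (show 0 < m by omega) (partGen m n f sd ss d) := by
  rw [nextGen_eq_dispMat_mul_partGen]
  exact newbornSub_mul_of_newborn_row_eq_zero _ _ _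
    fun _ _ hq => dispMat_apply_of_ne d (Ne.symm hq)
end

section
/- The net reproductive number is bounded above by the alternative net reproductive number: R₀ ≤ R̂₀. -/
open Matrix BigOperators

/-!
Reproduction only produces newborns and dispersal does not change the stage, so every row
of `N` at a non-newborn index vanishes. An eigenvector `v` of `N` for an eigenvalue `μ ≠ 0`
is therefore supported on the newborn indices, and comparing `‖μ v‖₁ = ‖N v‖₁` with the
column sums of `N` bounds `|μ|` by the largest newborn column sum of `N`. That column sum
is `‖N e_q‖₁` for a newborn unit vector `e_q ∈ 𝒳`, hence at most `R̂₀`.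
-/

namespace Matrix

variable {ι : Type*} [Fintype ι]

lemma eq_zero_of_mulVec_eq_smul_of_row_eq_zero {A : Matrix ι ι ℂ} {μ : ℂ} {v : ι → ℂ}
    (hv : A *ᵥ v = μ • v) (hμ : μ ≠ 0) {p : ι} (hp : ∀ q, A p q = 0) : v p = 0 := by
  have hAvp : (A *ᵥ v) p = 0 := by simp [mulVec, dotProduct, hp]
  simpa [hv, hμ] using hAvp

lemma norm_mul_sum_norm_le_sum_norm_mul_colSum (A : Matrix ι ι ℝ) {μ : ℂ} {v : ι → ℂ}
    (hv : A.map Complex.ofReal *ᵥ v = μ • v) :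
    ‖μ‖ * ∑ q, ‖v q‖ ≤ ∑ q, ‖v q‖ * ∑ p, |A p q| :=
  calc ‖μ‖ * ∑ q, ‖v q‖ = ∑ p, ‖(A.map Complex.ofReal *ᵥ v) p‖ := by
        simp [hv, Finset.mul_sum]
    _ ≤ ∑ p, ∑ q, |A p q| * ‖v q‖ := by
        refine Finset.sum_le_sum fun p _ => (norm_sum_le _ _).trans_eq ?_
        simp
    _ = ∑ q, ‖v q‖ * ∑ p, |A p q| := by
        rw [Finset.sum_comm]
        simp only [Finset.mul_sum, mul_comm]

variable [DecidableEq ι]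

lemma exists_mulVec_eq_smul_of_mem_spectrum {A : Matrix ι ι ℂ} {μ : ℂ}
    (hμ : μ ∈ spectrum ℂ A) : ∃ v ≠ 0, A *ᵥ v = μ • v := by
  rw [← spectrum_toLin'] at hμ
  obtain ⟨v, hv⟩ := (Module.End.HasEigenvalue.of_mem_spectrum hμ).exists_hasEigenvector
  exact ⟨v, hv.2, by simpa using Module.End.mem_eigenspace_iff.mp hv.1⟩

theorem specRad_le_of_row_eq_zero (A : Matrix ι ι ℝ) (P : ι → Prop) {c : ℝ} (hc : 0 ≤ c)
    (hrow : ∀ p q, ¬ P p → A p q = 0) (hcol : ∀ q, P q → ∑ p, |A p q| ≤ c) :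
    specRad A ≤ c := by
  refine Real.sSup_le ?_ hc
  rintro _ ⟨μ, hμ, rfl⟩
  obtain ⟨v, hv0, hv⟩ := exists_mulVec_eq_smul_of_mem_spectrum hμ
  rcases eq_or_ne μ 0 with rfl | hμ0
  · simpa using hc
  have hsupp : ∀ q, ¬ P q → v q = 0 := fun q hq =>
    eq_zero_of_mulVec_eq_smul_of_row_eq_zero hv hμ0 fun r => by simp [hrow q r hq]
  have hpos : 0 < ∑ q, ‖v q‖ := by
    obtain ⟨q, hq⟩ := Function.ne_iff.mp hv0
    exact (norm_pos_iff.mpr hq).trans_le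
      (Finset.single_le_sum (fun i _ => norm_nonneg (v i)) (Finset.mem_univ q))
  refine le_of_mul_le_mul_right ?_ hpos
  calc ‖μ‖ * ∑ q, ‖v q‖ ≤ ∑ q, ‖v q‖ * ∑ p, |A p q| :=
        norm_mul_sum_norm_le_sum_norm_mul_colSum A hv
    _ ≤ ∑ q, ‖v q‖ * c := by
        refine Finset.sum_le_sum fun q _ => ?_
        by_cases hq : P q
        · exact mul_le_mul_of_nonneg_left (hcol q hq) (norm_nonneg _)
        · simp [hsupp q hq]
    _ = c * ∑ q, ‖v q‖ := by rw [Finset.mul_sum]; simp only [mul_comm]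

end Matrix

section

variable {m n : ℕ}

lemma nextGen_apply_of_ne_zero (f : Fin m → Fin n → ℝ) (sd ss : Fin m → Fin n → ℝ)
    (d : Fin m → Fin n → Fin n → ℝ) {p : Fin m × Fin n} (hp : (p.1 : ℕ) ≠ 0)
    (q : Fin m × Fin n) : nextGen m n f sd ss d p q = 0 := by
  have hDF : ∀ r, (dispMat m n d * fecMat m n f) p r = 0 := fun r =>
    Finset.sum_eq_zero fun s _ => by
      by_cases hps : p.1 = s.1
      · simp [fecMat, localF, ← hps, hp]
      · simp [dispMat, hps]
  rw [nextGen, mul_apply]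
  exact Finset.sum_eq_zero fun r _ => by rw [hDF r, zero_mul]

lemma altR0_nonneg (N : Matrix (Fin m × Fin n) (Fin m × Fin n) ℝ) : 0 ≤ altR0 m n N :=
  Real.sSup_nonneg fun _ ⟨_, _, _, _, hr⟩ => hr ▸ Finset.sum_nonneg fun _ _ => abs_nonneg _

lemma sum_abs_apply_le_altR0 (N : Matrix (Fin m × Fin n) (Fin m × Fin n) ℝ)
    {q : Fin m × Fin n} (hq : (q.1 : ℕ) = 0) : ∑ p, |N p q| ≤ altR0 m n N := by
  refine le_csSup ⟨∑ p, ∑ r, |N p r|, ?_⟩ ⟨Pi.single q 1, ?_, ?_, ?_, ?_⟩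
  · rintro _ ⟨x, -, hx1, -, rfl⟩
    refine Finset.sum_le_sum fun p _ => (Finset.abs_sum_le_sum_abs _ _).trans ?_
    refine Finset.sum_le_sum fun r _ => ?_
    have hxr : |x r| ≤ 1 := hx1 ▸ Finset.single_le_sum (fun i _ => abs_nonneg (x i))
      (Finset.mem_univ r)
    rw [abs_mul]
    exact mul_le_of_le_one_right (abs_nonneg _) hxr
  · intro p
    by_cases h : p = q <;> simp [h]
  · rw [Finset.sum_eq_single q (fun p _ hp => by simp [hp]) (by simp)]
    simp
  · intro p hp
    exact Pi.single_eq_of_ne (fun h => hp (by rw [h]; exact hq)) _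
  · simp

end

theorem stmt6_general
    (m n : ℕ)
    (f : Fin m → Fin n → ℝ)
    (sd ss : Fin m → Fin n → ℝ)
    (d : Fin m → Fin n → Fin n → ℝ) :
    specRad (nextGen m n f sd ss d) ≤ altR0 m n (nextGen m n f sd ss d) :=
  Matrix.specRad_le_of_row_eq_zero _ (fun p => (p.1 : ℕ) = 0) (altR0_nonneg _)
    (fun _ q hp => nextGen_apply_of_ne_zero f sd ss d hp q)
    (fun _ hq => sum_abs_apply_le_altR0 _ hq)

theorem stmt6
    (m n : ℕ) (hm : 2 ≤ m) (hn : 1 ≤ n)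
    (f : Fin m → Fin n → ℝ) (hf : ∀ k i, 0 ≤ f k i)
    (sd ss : Fin m → Fin n → ℝ)
    (hsd : ∀ k i, 0 ≤ sd k i) (hss : ∀ k i, 0 ≤ ss k i)
    (hs1 : ∀ (k : Fin m) (i : Fin n),
      sd k i + (if (k : ℕ) + 1 < m then ss k i else 0) < 1)
    (d : Fin m → Fin n → Fin n → ℝ)
    (hd0 : ∀ k i j, 0 ≤ d k i j) (hd1 : ∀ k i j, d k i j ≤ 1)
    (hdsum : ∀ k j, ∑ i, d k i j = 1) :
    specRad (nextGen m n f sd ss d) ≤ altR0 m n (nextGen m n f sd ss d) :=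
  stmt6_general m n f sd ss d
end
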